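/- arXiv:1208.3835 — 8 statements merged into one kernel-verified Lean document; each statement's English description precedes it below -/
import Mathlib

section
/- Let F and C be finite sets, f : F → ℝ with f_i ≥ 0, c : F × C → ℝ, R : F → ℤ with R_i ≥ 1 for all i. Let x* : F × C → ℝ, y* : F → ℝ, α* : C → ℝ, β* : F × C → ℝ, z* : F → ℝ be nonnegative and satisfy the complementary slackness conditions: (C1) for all i, j, if x*_{ij} > 0 then α*_j = β*_{ij} + c_{ij}; (C2) for all i, if y*_i > 0 then Σ_{j∈C} β*_{ij} = f_i + z*_i; (C4) for all i, j, if β*_{ij} > 0 then x*_{ij} = y*_i; (C5) for all i, if z*_i > 0 then y*_i = R_i. Let P = {i ∈ F : y*_i = R_i} and, for each j ∈ C, let r̂_j = Σ_{i∈P} ⌈x*_{ij}⌉. Then Σ_{i∈P} Σ_{j∈C} ⌈x*_{ij}⌉ c_{ij} + Σ_{i∈P} R_i f_i = Σ_{j∈C} r̂_j α*_j − Σ_{i∈F} R_i z*_i. -/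
/-- Lemma 1 of the paper: the total cost of Stage 1 of the unified LP-rounding
algorithm ULPR equals `∑_j r̂_j α*_j − ∑_i R_i z*_i`, where `P` is the set of
sites with `y*_i = R_i` and `r̂_j = ∑_{i ∈ P} ⌈x*_{ij}⌉`, given the
complementary slackness conditions (C1), (C2), (C4), (C5). -/
theorem stmt2 {F C : Type*} [Fintype F] [Fintype C]
    (f : F → ℝ) (c : F → C → ℝ) (R : F → ℤ)
    (hf : ∀ i, 0 ≤ f i) (hR : ∀ i, 1 ≤ R i)
    (xs : F → C → ℝ) (ys : F → ℝ) (αs : C → ℝ) (βs : F → C → ℝ) (zs : F → ℝ)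
    (hx0 : ∀ i j, 0 ≤ xs i j) (hy0 : ∀ i, 0 ≤ ys i) (hα0 : ∀ j, 0 ≤ αs j)
    (hβ0 : ∀ i j, 0 ≤ βs i j) (hz0 : ∀ i, 0 ≤ zs i)
    (hC1 : ∀ i j, 0 < xs i j → αs j = βs i j + c i j)
    (hC2 : ∀ i, 0 < ys i → ∑ j, βs i j = f i + zs i)
    (hC4 : ∀ i j, 0 < βs i j → xs i j = ys i)
    (hC5 : ∀ i, 0 < zs i → ys i = (R i : ℝ))
    (P : Finset F) (hP : ∀ i, i ∈ P ↔ ys i = (R i : ℝ))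
    (rhat : C → ℤ) (hrhat : ∀ j, rhat j = ∑ i ∈ P, ⌈xs i j⌉) :
    ∑ i ∈ P, ∑ j, (⌈xs i j⌉ : ℝ) * c i j + ∑ i ∈ P, (R i : ℝ) * f i
      = ∑ j, (rhat j : ℝ) * αs j - ∑ i, (R i : ℝ) * zs i := by
  -- Off P, zs vanishes
  have hzP : ∀ i, i ∉ P → zs i = 0 := by
    intro i hi
    by_contra h
    exact hi ((hP i).2 (hC5 i ((hz0 i).lt_of_ne (Ne.symm h))))
  have hsum_z : ∑ i, (R i : ℝ) * zs i = ∑ i ∈ P, (R i : ℝ) * zs i := by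
    rw [← Finset.sum_subset (Finset.subset_univ P)]
    intro i _ hi; rw [hzP i hi, mul_zero]
  -- Key pointwise identity for i ∈ P
  have key : ∀ i ∈ P, ∀ j, (⌈xs i j⌉ : ℝ) * αs j
      = (⌈xs i j⌉ : ℝ) * c i j + (R i : ℝ) * βs i j := by
    intro i hi j
    have hyi : ys i = (R i : ℝ) := (hP i).1 hi
    rcases eq_or_lt_of_le (hx0 i j) with hx | hx
    · -- xs i j = 0
      have hceil : ⌈xs i j⌉ = 0 := by rw [← hx]; simp
      have hβ : βs i j = 0 := by
        by_contra h
        have hxy := hC4 i j ((hβ0 i j).lt_of_ne (Ne.symm h))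
        have hpos : (0:ℝ) < (R i : ℝ) := by exact_mod_cast (hR i).trans_lt' zero_lt_one
        linarith [hxy, hyi, hx]
      simp [hceil, hβ]
    · have hα := hC1 i j hx
      rcases eq_or_lt_of_le (hβ0 i j) with hβ | hβ
      · rw [hα, ← hβ]; ring
      · have hxy : xs i j = ys i := hC4 i j hβ
        have : (⌈xs i j⌉ : ℝ) = (R i : ℝ) := by
          rw [hxy, hyi, Int.ceil_intCast]
        rw [hα, this]; ring
  -- Sum the RHS
  have hstep : ∑ j, (rhat j : ℝ) * αs j
      = ∑ i ∈ P, ∑ j, (⌈xs i j⌉ : ℝ) * c i j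
        + ∑ i ∈ P, (R i : ℝ) * (f i + zs i) := by
    have : ∑ j, (rhat j : ℝ) * αs j = ∑ i ∈ P, ∑ j, (⌈xs i j⌉ : ℝ) * αs j := by
      rw [Finset.sum_comm]
      refine Finset.sum_congr rfl fun j _ => ?_
      rw [hrhat j]
      push_cast
      rw [Finset.sum_mul]
    rw [this]
    rw [← Finset.sum_add_distrib]
    refine Finset.sum_congr rfl fun i hi => ?_
    have hyi : ys i = (R i : ℝ) := (hP i).1 hi
    have hypos : 0 < ys i := by
      rw [hyi]; exact_mod_cast (hR i).trans_lt' zero_lt_one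
    calc ∑ j, (⌈xs i j⌉ : ℝ) * αs j
        = ∑ j, ((⌈xs i j⌉ : ℝ) * c i j + (R i : ℝ) * βs i j) :=
          Finset.sum_congr rfl fun j _ => key i hi j
      _ = ∑ j, (⌈xs i j⌉ : ℝ) * c i j + (R i : ℝ) * ∑ j, βs i j := by
          rw [Finset.sum_add_distrib, Finset.mul_sum]
      _ = ∑ j, (⌈xs i j⌉ : ℝ) * c i j + (R i : ℝ) * (f i + zs i) := by
          rw [hC2 i hypos]
  rw [hstep, hsum_z]
  simp [mul_add, Finset.sum_add_distrib]
  ring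
end

section
/- Let m ≥ 1 and f₁ ≤ f₂ ≤ … ≤ f_m be nonnegative reals, let y*₁, …, y*_m be nonnegative reals, and let r be a positive integer with Σ_{i=1}^m y*_i = r. For 0 ≤ i ≤ m define Y_i = min(Σ_{k=1}^{i} ⌈y*_k⌉, r) (with Y₀ = 0), and set y_i = Y_i − Y_{i−1} for 1 ≤ i ≤ m. Then y_i are nonnegative integers with Σ_{i=1}^m y_i = r, and Σ_{i=1}^m f_i y_i ≤ Σ_{i=1}^m f_i y*_i. -/
open Finset

private lemma abel_aux (f D : ℕ → ℝ) (hD0 : D 0 = 0) :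
    ∀ m : ℕ, ∑ i ∈ Icc 1 (m+1), f i * (D i - D (i-1)) =
      f (m+1) * D (m+1) + ∑ i ∈ Icc 1 m, (f i - f (i+1)) * D i := by
  intro m
  induction m with
  | zero => simp [hD0]
  | succ n ih =>
    rw [Finset.sum_Icc_succ_top (by omega : 1 ≤ n+1+1), ih,
        Finset.sum_Icc_succ_top (by omega : 1 ≤ n+1)]
    simp only [Nat.add_sub_cancel]
    ring

private lemma tele_aux (Y : ℕ → ℤ) : ∀ m : ℕ, ∑ i ∈ Icc 1 m, (Y i - Y (i-1)) = Y m - Y 0 := by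
  intro m
  induction m with
  | zero => simp
  | succ n ih =>
    rw [Finset.sum_Icc_succ_top (by omega : 1 ≤ n+1), ih]
    simp only [Nat.add_sub_cancel]
    ring

/-- Lemma 2 of the paper: rounding up the fractional openings `y*_i` of the sites in a
cluster in nondecreasing order of facility cost `f_i`, truncating as soon as the rounded
openings sum to `r = ∑_i y*_i`, yields nonnegative integers `y_i` summing to `r` with
facility cost at most the fractional cost `∑_i f_i y*_i`. -/
theorem stmt3 (m : ℕ) (hm : 1 ≤ m) (f ys : ℕ → ℝ) (r : ℤ)
    (hf0 : ∀ i, 1 ≤ i → i ≤ m → 0 ≤ f i)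
    (hfmono : ∀ i j, 1 ≤ i → i ≤ j → j ≤ m → f i ≤ f j)
    (hys0 : ∀ i, 1 ≤ i → i ≤ m → 0 ≤ ys i)
    (hr : 0 < r)
    (hsum : ∑ i ∈ Finset.Icc 1 m, ys i = (r : ℝ))
    (Y : ℕ → ℤ) (hY : ∀ i, i ≤ m → Y i = min (∑ k ∈ Finset.Icc 1 i, ⌈ys k⌉) r)
    (y : ℕ → ℤ) (hy : ∀ i, 1 ≤ i → i ≤ m → y i = Y i - Y (i - 1)) :
    (∀ i, 1 ≤ i → i ≤ m → 0 ≤ y i) ∧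
    (∑ i ∈ Finset.Icc 1 m, y i = r) ∧
    (∑ i ∈ Finset.Icc 1 m, f i * (y i : ℝ) ≤ ∑ i ∈ Finset.Icc 1 m, f i * ys i) := by
  -- Y 0 = 0
  have hY0 : Y 0 = 0 := by
    rw [hY 0 (by omega)]
    simp [min_eq_left hr.le]
  -- partial sums of ys
  set Z : ℕ → ℝ := fun i => ∑ k ∈ Icc 1 i, ys k with hZ
  have hZstep : ∀ i, 1 ≤ i → Z i - Z (i-1) = ys i := by
    intro i hi
    obtain ⟨j, rfl⟩ := Nat.exists_eq_add_of_le hi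
    simp only [hZ]
    rw [show 1 + j = j + 1 by omega, Finset.sum_Icc_succ_top (by omega : 1 ≤ j+1)]
    simp
  have hZmono : ∀ i j, i ≤ j → j ≤ m → Z i ≤ Z j := by
    intro i j hij hjm
    apply Finset.sum_le_sum_of_subset_of_nonneg
    · exact Finset.Icc_subset_Icc_right hij
    · intro k hk _
      simp only [Finset.mem_Icc] at hk
      exact hys0 k hk.1 (le_trans hk.2 hjm)
  -- Z i ≤ sum of ceils
  have hZS : ∀ i, Z i ≤ ((∑ k ∈ Icc 1 i, ⌈ys k⌉ : ℤ) : ℝ) := by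
    intro i
    push_cast
    exact Finset.sum_le_sum fun k _ => Int.le_ceil _
  -- Y m = r
  have hYm : Y m = r := by
    rw [hY m le_rfl]
    apply min_eq_right
    have h1 : (r : ℝ) ≤ ((∑ k ∈ Icc 1 m, ⌈ys k⌉ : ℤ) : ℝ) := hsum ▸ hZS m
    exact_mod_cast h1
  -- monotonicity of Y
  have hYmono : ∀ i, 1 ≤ i → i ≤ m → Y (i-1) ≤ Y i := by
    intro i hi him
    rw [hY (i-1) (by omega), hY i him]
    apply min_le_min _ le_rfl
    apply Finset.sum_le_sum_of_subset_of_nonneg (Finset.Icc_subset_Icc_right (by omega))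
    intro k hk _
    simp only [Finset.mem_Icc] at hk
    exact Int.ceil_nonneg (hys0 k hk.1 (le_trans hk.2 him))
  have hy0 : ∀ i, 1 ≤ i → i ≤ m → 0 ≤ y i := by
    intro i hi him
    rw [hy i hi him]
    exact sub_nonneg.mpr (hYmono i hi him)
  refine ⟨hy0, ?_, ?_⟩
  · rw [Finset.sum_congr rfl fun i hi => by
      simp only [Finset.mem_Icc] at hi; exact hy i hi.1 hi.2]
    rw [tele_aux Y m, hYm, hY0, sub_zero]
  · -- cost bound via Abel summation
    set D : ℕ → ℝ := fun i => (Y i : ℝ) - Z i with hD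
    have hD0 : D 0 = 0 := by simp [hD, hY0, hZ]
    have hDm : D m = 0 := by
      simp only [hD, hZ]
      rw [hYm, hsum]; ring
    have hDnn : ∀ i, i ≤ m → 0 ≤ D i := by
      intro i him
      have h1 : Z i ≤ (Y i : ℝ) := by
        rw [hY i him]
        push_cast
        refine le_min ?_ ?_
        · have := hZS i; push_cast at this; exact this
        calc Z i ≤ Z m := hZmono i m him le_rfl
          _ = r := hsum
      simpa [hD] using sub_nonneg.mpr h1
    have hdiff : ∑ i ∈ Icc 1 m, f i * (y i : ℝ) - ∑ i ∈ Icc 1 m, f i * ys i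
        = ∑ i ∈ Icc 1 m, f i * (D i - D (i-1)) := by
      rw [← Finset.sum_sub_distrib]
      refine Finset.sum_congr rfl fun i hi => ?_
      simp only [Finset.mem_Icc] at hi
      have h1 : (y i : ℝ) = (Y i : ℝ) - (Y (i-1) : ℝ) := by
        rw [hy i hi.1 hi.2]; push_cast; ring
      have h2 := hZstep i hi.1
      simp only [hD]
      rw [h1, ← h2]
      ring
    obtain ⟨n, rfl⟩ : ∃ n, m = n + 1 := ⟨m - 1, by omega⟩
    have habel := abel_aux f D hD0 n
    have hterms : ∑ i ∈ Icc 1 n, (f i - f (i+1)) * D i ≤ 0 := by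
      apply Finset.sum_nonpos
      intro i hi
      simp only [Finset.mem_Icc] at hi
      exact mul_nonpos_of_nonpos_of_nonneg
        (sub_nonpos.mpr (hfmono i (i+1) hi.1 (by omega) (by omega)))
        (hDnn i (by omega))
    have : ∑ i ∈ Icc 1 (n+1), f i * (y i : ℝ) - ∑ i ∈ Icc 1 (n+1), f i * ys i ≤ 0 := by
      rw [hdiff, habel, hDm]
      simpa using hterms
    linarith
end

section
/- Let F and C be finite sets, let r : C → ℤ with r_j ≥ 1, and let x* : F × C → ℝ, y* : F → ℝ be nonnegative with Σ_{i∈F} x*_{ij} = r_j for all j and x*_{ij} ≤ y*_i for all i, j. Define, for all i ∈ F and j ∈ C: y^l_i = max(0, ⌊y*_i⌋ − 1), x^l_{ij} = min(⌊x*_{ij}⌋, y^l_i), y^s_i = y*_i − y^l_i, x^s_{ij} = x*_{ij} − x^l_{ij}, r^l_j = Σ_{i∈F} x^l_{ij}, r^s_j = r_j − r^l_j, R^l_i = y^l_i, and R^s_i = ⌈y*_i⌉ − y^l_i. Then: (a) x^l and y^l are nonnegative integers with Σ_i x^l_{ij} ≥ r^l_j, x^l_{ij} ≤ y^l_i, and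 y^l_i ≤ R^l_i for all i, j; and (b) x^s and y^s are nonnegative reals with Σ_i x^s_{ij} ≥ r^s_j, x^s_{ij} ≤ y^s_i, and y^s_i ≤ R^s_i for all i, j. -/
/-- Lemma 5 of the paper (splitting feasibility): splitting a feasible fractional FTRA
solution `(x*, y*)` with tight requirements into a large integral part `(x^l, y^l)` and a
small fractional part `(x^s, y^s)` yields feasible solutions of the large instance
(requirements `r^l`, capacities `R^l`) and of the small instance (requirements `r^s`,
capacities `R^s`) respectively. -/
theorem stmt5 {F C : Type*} [Fintype F] [Fintype C]
    (r : C → ℤ) (hr : ∀ j, 1 ≤ r j)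
    (xs : F → C → ℝ) (ys : F → ℝ)
    (hx0 : ∀ i j, 0 ≤ xs i j) (hy0 : ∀ i, 0 ≤ ys i)
    (hsum : ∀ j, ∑ i, xs i j = (r j : ℝ))
    (hxy : ∀ i j, xs i j ≤ ys i)
    (yl : F → ℤ) (hyl : ∀ i, yl i = max 0 (⌊ys i⌋ - 1))
    (xl : F → C → ℤ) (hxl : ∀ i j, xl i j = min ⌊xs i j⌋ (yl i))
    (ysm : F → ℝ) (hysm : ∀ i, ysm i = ys i - (yl i : ℝ))
    (xsm : F → C → ℝ) (hxsm : ∀ i j, xsm i j = xs i j - (xl i j : ℝ))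
    (rl : C → ℤ) (hrl : ∀ j, rl j = ∑ i, xl i j)
    (rs : C → ℤ) (hrs : ∀ j, rs j = r j - rl j)
    (Rl : F → ℤ) (hRl : ∀ i, Rl i = yl i)
    (Rs : F → ℤ) (hRs : ∀ i, Rs i = ⌈ys i⌉ - yl i) :
    ((∀ i, 0 ≤ yl i) ∧ (∀ i j, 0 ≤ xl i j) ∧
     (∀ j, rl j ≤ ∑ i, xl i j) ∧ (∀ i j, xl i j ≤ yl i) ∧ (∀ i, yl i ≤ Rl i)) ∧
    ((∀ i, 0 ≤ ysm i) ∧ (∀ i j, 0 ≤ xsm i j) ∧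
     (∀ j, (rs j : ℝ) ≤ ∑ i, xsm i j) ∧ (∀ i j, xsm i j ≤ ysm i) ∧
     (∀ i, ysm i ≤ (Rs i : ℝ))) := by
  have hyl0 : ∀ i, 0 ≤ yl i := fun i => by rw [hyl]; exact le_max_left _ _
  have hflx0 : ∀ i j, (0:ℤ) ≤ ⌊xs i j⌋ := fun i j => Int.floor_nonneg.2 (hx0 i j)
  have hxl0 : ∀ i j, 0 ≤ xl i j := fun i j => by
    rw [hxl]; exact le_min (hflx0 i j) (hyl0 i)
  have hxlyl : ∀ i j, xl i j ≤ yl i := fun i j => by rw [hxl]; exact min_le_right _ _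
  have hylfl : ∀ i, yl i ≤ ⌊ys i⌋ := fun i => by
    rw [hyl]; exact max_le (Int.floor_nonneg.2 (hy0 i)) (by omega)
  have hxlle : ∀ i j, (xl i j : ℝ) ≤ xs i j := fun i j => by
    rw [hxl]; push_cast
    exact le_trans (by exact_mod_cast min_le_left ⌊xs i j⌋ (yl i)) (Int.floor_le _)
  have hysm0 : ∀ i, 0 ≤ ysm i := fun i => by
    rw [hysm]
    have : (yl i : ℝ) ≤ ys i :=
      le_trans (by exact_mod_cast hylfl i) (Int.floor_le _)
    linarith
  refine ⟨⟨hyl0, hxl0, fun j => le_of_eq (hrl j), hxlyl, fun i => le_of_eq (hRl i).symm⟩,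
    ⟨hysm0, fun i j => by rw [hxsm]; linarith [hxlle i j], ?_, ?_, ?_⟩⟩
  · intro j
    have : ∑ i, xsm i j = (r j : ℝ) - (rl j : ℝ) := by
      simp only [hxsm, Finset.sum_sub_distrib, hsum, hrl]
      push_cast; ring
    rw [this, hrs]; push_cast; ring_nf; exact le_refl _
  · intro i j
    rw [hxsm, hysm]
    rcases le_or_gt (yl i) ⌊xs i j⌋ with h | h
    · have : xl i j = yl i := by rw [hxl]; omega
      rw [this]; linarith [hxy i j]
    · have hxleq : xl i j = ⌊xs i j⌋ := by rw [hxl]; omega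
      have hylpos : yl i = ⌊ys i⌋ - 1 := by
        have := hyl i
        rcases max_cases (0:ℤ) (⌊ys i⌋ - 1) with ⟨h1, h2⟩ | ⟨h1, h2⟩
        · exfalso; have := hflx0 i j; omega
        · omega
      rw [hxleq, hylpos]
      have h1 : xs i j - ⌊xs i j⌋ < 1 := by
        have := Int.lt_floor_add_one (xs i j); linarith
      have h2 : (⌊ys i⌋ : ℝ) ≤ ys i := Int.floor_le _
      push_cast; linarith
  · intro i
    rw [hysm, hRs]
    have := Int.le_ceil (ys i)
    push_cast; linarith
end

section
/- With the definitions of Lemma 5 (y^l_i = max(0, ⌊y*_i⌋ − 1), x^l_{ij} = min(⌊x*_{ij}⌋, y^l_i), y^s_i = y*_i − y^l_i, x^s_{ij} = x*_{ij} − x^l_{ij}, r^l_j = Σ_i x^l_{ij}, r^s_j = r_j − r^l_j, R^l_i = y^l_i, R^s_i = ⌈y*_i⌉ − y^l_i), for every client j ∈ C one has r^l_j ≤ Σ_{i∈F} R^l_i and r^s_j ≤ Σ_{i∈F} R^s_i. -/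
/-- Lemma 6(i) of the paper: with the splitting of the instance-shrinking reduction,
for every client `j` the split requirements are bounded by the split total capacities:
`r^l_j ≤ ∑_i R^l_i` and `r^s_j ≤ ∑_i R^s_i`. -/
theorem stmt6 {F C : Type*} [Fintype F] [Fintype C]
    (r : C → ℤ) (hr : ∀ j, 1 ≤ r j)
    (xs : F → C → ℝ) (ys : F → ℝ)
    (hx0 : ∀ i j, 0 ≤ xs i j) (hy0 : ∀ i, 0 ≤ ys i)
    (hsum : ∀ j, ∑ i, xs i j = (r j : ℝ))
    (hxy : ∀ i j, xs i j ≤ ys i)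
    (yl : F → ℤ) (hyl : ∀ i, yl i = max 0 (⌊ys i⌋ - 1))
    (xl : F → C → ℤ) (hxl : ∀ i j, xl i j = min ⌊xs i j⌋ (yl i))
    (ysm : F → ℝ) (hysm : ∀ i, ysm i = ys i - (yl i : ℝ))
    (xsm : F → C → ℝ) (hxsm : ∀ i j, xsm i j = xs i j - (xl i j : ℝ))
    (rl : C → ℤ) (hrl : ∀ j, rl j = ∑ i, xl i j)
    (rs : C → ℤ) (hrs : ∀ j, rs j = r j - rl j)
    (Rl : F → ℤ) (hRl : ∀ i, Rl i = yl i)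
    (Rs : F → ℤ) (hRs : ∀ i, Rs i = ⌈ys i⌉ - yl i) :
    ∀ j, rl j ≤ ∑ i, Rl i ∧ rs j ≤ ∑ i, Rs i := by
  intro j
  constructor
  · rw [hrl]
    apply Finset.sum_le_sum
    intro i _
    rw [hxl, hRl]
    exact min_le_right _ _
  · have key : ∀ i, xs i j - (xl i j : ℝ) ≤ ((⌈ys i⌉ - yl i : ℤ) : ℝ) := by
      intro i
      have hylceil : yl i ≤ ⌈ys i⌉ := by
        rw [hyl]
        refine max_le (Int.ceil_nonneg (hy0 i)) ?_
        have := Int.floor_le_ceil (ys i)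
        omega
      rcases le_or_gt ⌊xs i j⌋ (yl i) with h | h
      · rw [hxl, min_eq_left h]
        rcases eq_or_lt_of_le (Int.floor_le (xs i j)) with he | hlt
        · have h0 : (0 : ℝ) ≤ ((⌈ys i⌉ - yl i : ℤ) : ℝ) := by
            exact_mod_cast sub_nonneg.mpr hylceil
          linarith [he.le, he.ge]
        · have h1 : xs i j - (⌊xs i j⌋ : ℝ) < 1 := by
            have := Int.lt_floor_add_one (xs i j)
            linarith
          have hys : 0 < ys i := by
            have h0 : (0 : ℝ) ≤ (⌊xs i j⌋ : ℝ) := by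
              exact_mod_cast Int.floor_nonneg.mpr (hx0 i j)
            linarith [hxy i j]
          have hceil1 : 1 ≤ ⌈ys i⌉ := by
            exact_mod_cast Int.ceil_pos.mpr hys
          have hyl1 : yl i ≤ ⌈ys i⌉ - 1 := by
            rw [hyl]
            have := Int.floor_le_ceil (ys i)
            omega
          have : (1 : ℝ) ≤ ((⌈ys i⌉ - yl i : ℤ) : ℝ) := by
            exact_mod_cast by omega
          linarith
      · rw [hxl, min_eq_right (le_of_lt h)]
        push_cast
        have := Int.le_ceil (ys i)
        linarith [hxy i j]
    have hsumle : ∑ i, (xs i j - (xl i j : ℝ)) ≤ ∑ i, ((⌈ys i⌉ - yl i : ℤ) : ℝ) :=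
      Finset.sum_le_sum fun i _ => key i
    rw [Finset.sum_sub_distrib] at hsumle
    rw [hsum j] at hsumle
    have h1 : ((r j : ℝ) - (rl j : ℝ)) ≤ ∑ i, ((Rs i : ℤ) : ℝ) := by
      rw [hrl]
      push_cast
      calc (r j : ℝ) - ∑ i, (xl i j : ℝ) ≤ ∑ i, ((⌈ys i⌉ - yl i : ℤ) : ℝ) := hsumle
        _ = ∑ i, ((Rs i : ℤ) : ℝ) := by
            apply Finset.sum_congr rfl
            intro i _
            rw [hRs]
    rw [hrs]
    have : ((r j - rl j : ℤ) : ℝ) ≤ ((∑ i, Rs i : ℤ) : ℝ) := by push_cast; push_cast at h1; linarith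
    exact_mod_cast this
end

section
/- Let F and C be finite sets, f : F → ℝ and c : F × C → ℝ nonnegative, r : C → ℤ with r_j ≥ 1, R : F → ℤ with R_i ≥ 1, and let (x*, y*) be nonnegative with Σ_i x*_{ij} = r_j, x*_{ij} ≤ y*_i, y*_i ≤ R_i. Define the split quantities y^l_i = max(0, ⌊y*_i⌋ − 1), x^l_{ij} = min(⌊x*_{ij}⌋, y^l_i), y^s = y* − y^l, x^s = x* − x^l, r^l_j = Σ_i x^l_{ij}, r^s_j = r_j − r^l_j, R^l_i = y^l_i, R^s_i = ⌈y*_i⌉ − y^l_i, and let cost(x, y) = Σ_i f_i y_i + Σ_i Σ_j c_{ij} x_{ij}. Suppose ρ ≥ 1 and (x̄, ȳ) is a nonnegative integral solution satisfying Σ_i x̄_{ij} ≥ r^s_j, x̄_{ij} ≤ ȳ_i, ȳ_i ≤ R^s_i, and cost(x̄, ȳ) ≤ ρ · cost(x^s, y^s). Then (x^l + x̄, y^l + ȳ) is a nonnegative integral solution with Σ_i (x^l_{ij} + x̄_{ij}) ≥ r_j, x^l_{ij} + x̄_{ij} ≤ y^l_i + ȳ_i, y^l_i + ȳ_i ≤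 R_i for all i, j, and cost(x^l + x̄, y^l + ȳ) ≤ ρ · cost(x*, y*). -/
/-- The core of Theorem 4 (the reduction theorem): combining the integral solution
`(x^l, y^l)` of the large split instance with any integral solution `(x̄, ȳ)` of the
small split instance whose cost is at most `ρ` times the cost of `(x^s, y^s)` yields a
feasible integral solution of the original FTRA instance of cost at most
`ρ · cost(x*, y*)`. -/
theorem stmt8 {F C : Type*} [Fintype F] [Fintype C]
    (f : F → ℝ) (c : F → C → ℝ) (hf : ∀ i, 0 ≤ f i) (hc : ∀ i j, 0 ≤ c i j)
    (r : C → ℤ) (hr : ∀ j, 1 ≤ r j)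
    (R : F → ℤ) (hR : ∀ i, 1 ≤ R i)
    (xs : F → C → ℝ) (ys : F → ℝ)
    (hx0 : ∀ i j, 0 ≤ xs i j) (hy0 : ∀ i, 0 ≤ ys i)
    (hsum : ∀ j, ∑ i, xs i j = (r j : ℝ))
    (hxy : ∀ i j, xs i j ≤ ys i)
    (hyR : ∀ i, ys i ≤ (R i : ℝ))
    (yl : F → ℤ) (hyl : ∀ i, yl i = max 0 (⌊ys i⌋ - 1))
    (xl : F → C → ℤ) (hxl : ∀ i j, xl i j = min ⌊xs i j⌋ (yl i))
    (ysm : F → ℝ) (hysm : ∀ i, ysm i = ys i - (yl i : ℝ))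
    (xsm : F → C → ℝ) (hxsm : ∀ i j, xsm i j = xs i j - (xl i j : ℝ))
    (rl : C → ℤ) (hrl : ∀ j, rl j = ∑ i, xl i j)
    (rs : C → ℤ) (hrs : ∀ j, rs j = r j - rl j)
    (Rl : F → ℤ) (hRl : ∀ i, Rl i = yl i)
    (Rs : F → ℤ) (hRs : ∀ i, Rs i = ⌈ys i⌉ - yl i)
    (ρ : ℝ) (hρ : 1 ≤ ρ)
    (xb : F → C → ℤ) (yb : F → ℤ)
    (hxb0 : ∀ i j, 0 ≤ xb i j) (hyb0 : ∀ i, 0 ≤ yb i)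
    (hbsum : ∀ j, rs j ≤ ∑ i, xb i j)
    (hbxy : ∀ i j, xb i j ≤ yb i)
    (hbyR : ∀ i, yb i ≤ Rs i)
    (hbcost : ∑ i, f i * (yb i : ℝ) + ∑ i, ∑ j, c i j * (xb i j : ℝ)
      ≤ ρ * (∑ i, f i * ysm i + ∑ i, ∑ j, c i j * xsm i j)) :
    (∀ i j, 0 ≤ xl i j + xb i j) ∧ (∀ i, 0 ≤ yl i + yb i) ∧
    (∀ j, r j ≤ ∑ i, (xl i j + xb i j)) ∧
    (∀ i j, xl i j + xb i j ≤ yl i + yb i) ∧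
    (∀ i, yl i + yb i ≤ R i) ∧
    (∑ i, f i * ((yl i + yb i : ℤ) : ℝ) + ∑ i, ∑ j, c i j * ((xl i j + xb i j : ℤ) : ℝ)
      ≤ ρ * (∑ i, f i * ys i + ∑ i, ∑ j, c i j * xs i j)) := by
  have hyl0 : ∀ i, 0 ≤ yl i := fun i => (hyl i).symm ▸ le_max_left _ _
  have hxl0 : ∀ i j, 0 ≤ xl i j := by
    intro i j
    rw [hxl i j]
    exact le_min (Int.floor_nonneg.mpr (hx0 i j)) (hyl0 i)
  have hylys : ∀ i, (yl i : ℝ) ≤ ys i := by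
    intro i
    have h1 : yl i ≤ ⌊ys i⌋ := by
      rw [hyl i]
      have : (0:ℤ) ≤ ⌊ys i⌋ := Int.floor_nonneg.mpr (hy0 i)
      omega
    calc (yl i : ℝ) ≤ (⌊ys i⌋ : ℝ) := by exact_mod_cast h1
      _ ≤ ys i := Int.floor_le _
  have hxlxs : ∀ i j, (xl i j : ℝ) ≤ xs i j := by
    intro i j
    have : xl i j ≤ ⌊xs i j⌋ := by rw [hxl i j]; exact min_le_left _ _
    calc (xl i j : ℝ) ≤ (⌊xs i j⌋ : ℝ) := by exact_mod_cast this
      _ ≤ xs i j := Int.floor_le _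
  refine ⟨fun i j => add_nonneg (hxl0 i j) (hxb0 i j),
    fun i => add_nonneg (hyl0 i) (hyb0 i), ?_, ?_, ?_, ?_⟩
  · intro j
    have h := hbsum j
    rw [hrs j, hrl j] at h
    rw [Finset.sum_add_distrib]
    omega
  · intro i j
    have h1 : xl i j ≤ yl i := by rw [hxl i j]; exact min_le_right _ _
    have := hbxy i j
    omega
  · intro i
    have h1 := hbyR i
    rw [hRs i] at h1
    have h2 : ⌈ys i⌉ ≤ R i := Int.ceil_le.mpr (hyR i)
    omega
  · have hA0 : 0 ≤ ∑ i, f i * (yl i : ℝ) + ∑ i, ∑ j, c i j * (xl i j : ℝ) := by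
      apply add_nonneg
      · exact Finset.sum_nonneg fun i _ => mul_nonneg (hf i)
          (by exact_mod_cast hyl0 i)
      · exact Finset.sum_nonneg fun i _ => Finset.sum_nonneg fun j _ =>
          mul_nonneg (hc i j) (by exact_mod_cast hxl0 i j)
    have hC0 : 0 ≤ ∑ i, f i * ysm i + ∑ i, ∑ j, c i j * xsm i j := by
      apply add_nonneg
      · exact Finset.sum_nonneg fun i _ => mul_nonneg (hf i)
          (by rw [hysm i]; linarith [hylys i])
      · exact Finset.sum_nonneg fun i _ => Finset.sum_nonneg fun j _ =>
          mul_nonneg (hc i j) (by rw [hxsm i j]; linarith [hxlxs i j])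
    have hsplitY : ∑ i, f i * ys i
        = ∑ i, f i * (yl i : ℝ) + ∑ i, f i * ysm i := by
      rw [← Finset.sum_add_distrib]
      exact Finset.sum_congr rfl fun i _ => by rw [hysm i]; ring
    have hsplitX : ∑ i, ∑ j, c i j * xs i j
        = (∑ i, ∑ j, c i j * (xl i j : ℝ)) + ∑ i, ∑ j, c i j * xsm i j := by
      rw [← Finset.sum_add_distrib]
      exact Finset.sum_congr rfl fun i _ => by
        rw [← Finset.sum_add_distrib]
        exact Finset.sum_congr rfl fun j _ => by rw [hxsm i j]; ring
    have hLHS : ∑ i, f i * ((yl i + yb i : ℤ) : ℝ)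
        + ∑ i, ∑ j, c i j * ((xl i j + xb i j : ℤ) : ℝ)
        = (∑ i, f i * (yl i : ℝ) + ∑ i, ∑ j, c i j * (xl i j : ℝ))
          + (∑ i, f i * (yb i : ℝ) + ∑ i, ∑ j, c i j * (xb i j : ℝ)) := by
      have e1 : ∑ i, f i * ((yl i + yb i : ℤ) : ℝ)
          = ∑ i, f i * (yl i : ℝ) + ∑ i, f i * (yb i : ℝ) := by
        rw [← Finset.sum_add_distrib]
        exact Finset.sum_congr rfl fun i _ => by push_cast; ring
      have e2 : ∑ i, ∑ j, c i j * ((xl i j + xb i j : ℤ) : ℝ)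
          = (∑ i, ∑ j, c i j * (xl i j : ℝ)) + ∑ i, ∑ j, c i j * (xb i j : ℝ) := by
        rw [← Finset.sum_add_distrib]
        refine Finset.sum_congr rfl fun i _ => ?_
        rw [← Finset.sum_add_distrib]
        exact Finset.sum_congr rfl fun j _ => by push_cast; ring
      rw [e1, e2]; ring
    rw [hLHS, hsplitY, hsplitX]
    nlinarith [hbcost, hA0, hC0]
end

section
/- Let F and C be finite sets, f : F → ℝ, c : F × C → ℝ, r : C → ℤ, R : F → ℤ, and ρ_f, ρ_c ≥ 0. Let α : C → ℝ, β : F × C → ℝ, z : F → ℝ be nonnegative and satisfy the relaxed dual constraints: (C6) α_j − β_{ij} ≤ ρ_c c_{ij} for all i ∈ F, j ∈ C, and (C7) Σ_{j∈C} β_{ij} ≤ ρ_f f_i + z_i for all i ∈ F. Let (x'', y'') be any nonnegative solution with Σ_{i∈F} x''_{ij} ≥ r_j for all j, x''_{ij} ≤ y''_i for all i, j, and y''_i ≤ R_i for all i, and suppose α_j ≥ 0, r_j ≥ 0, z_i ≥ 0, R_i ≥ 0. Then Σ_{j∈C} r_j α_j − Σ_{i∈F} R_i z_i ≤ ρ_f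 Σ_{i∈F} f_i y''_i + ρ_c Σ_{i∈F} Σ_{j∈C} c_{ij} x''_{ij}. -/
/-- Lemma 10 of the paper (relaxed weak duality): if `(α, β, z)` satisfies the relaxed
dual constraints (C6) and (C7), then its dual objective value is bounded by `ρ_f` times
the facility cost plus `ρ_c` times the connection cost of any feasible primal solution
`(x'', y'')`. -/
theorem stmt9 {F C : Type*} [Fintype F] [Fintype C]
    (f : F → ℝ) (c : F → C → ℝ) (r : C → ℤ) (R : F → ℤ)
    (ρf ρc : ℝ) (hρf : 0 ≤ ρf) (hρc : 0 ≤ ρc)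
    (α : C → ℝ) (β : F → C → ℝ) (z : F → ℝ)
    (hα0 : ∀ j, 0 ≤ α j) (hβ0 : ∀ i j, 0 ≤ β i j) (hz0 : ∀ i, 0 ≤ z i)
    (hC6 : ∀ i j, α j - β i j ≤ ρc * c i j)
    (hC7 : ∀ i, ∑ j, β i j ≤ ρf * f i + z i)
    (x : F → C → ℝ) (y : F → ℝ)
    (hx0 : ∀ i j, 0 ≤ x i j) (hy0 : ∀ i, 0 ≤ y i)
    (hsum : ∀ j, (r j : ℝ) ≤ ∑ i, x i j)
    (hxy : ∀ i j, x i j ≤ y i)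
    (hyR : ∀ i, y i ≤ (R i : ℝ))
    (hr0 : ∀ j, 0 ≤ r j) (hR0 : ∀ i, 0 ≤ R i) :
    ∑ j, (r j : ℝ) * α j - ∑ i, (R i : ℝ) * z i
      ≤ ρf * ∑ i, f i * y i + ρc * ∑ i, ∑ j, c i j * x i j := by
  have h1 : ∑ j, (r j : ℝ) * α j ≤ ∑ i, ∑ j, x i j * α j := by
    rw [Finset.sum_comm]
    apply Finset.sum_le_sum
    intro j _
    rw [← Finset.sum_mul]
    exact mul_le_mul_of_nonneg_right (hsum j) (hα0 j)
  have h2 : ∑ i, ∑ j, x i j * α j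
      ≤ ρc * (∑ i, ∑ j, c i j * x i j) + ∑ i, ∑ j, x i j * β i j := by
    rw [Finset.mul_sum, ← Finset.sum_add_distrib]
    apply Finset.sum_le_sum
    intro i _
    rw [Finset.mul_sum, ← Finset.sum_add_distrib]
    apply Finset.sum_le_sum
    intro j _
    have := mul_le_mul_of_nonneg_left (hC6 i j) (hx0 i j)
    nlinarith [hx0 i j]
  have h3 : ∑ i, ∑ j, x i j * β i j ≤ ∑ i, (ρf * f i + z i) * y i := by
    apply Finset.sum_le_sum
    intro i _
    calc ∑ j, x i j * β i j ≤ ∑ j, y i * β i j := by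
          apply Finset.sum_le_sum
          intro j _
          exact mul_le_mul_of_nonneg_right (hxy i j) (hβ0 i j)
      _ = (∑ j, β i j) * y i := by rw [← Finset.mul_sum, mul_comm]
      _ ≤ (ρf * f i + z i) * y i := mul_le_mul_of_nonneg_right (hC7 i) (hy0 i)
  have h4 : ∑ i, (ρf * f i + z i) * y i
      ≤ ρf * ∑ i, f i * y i + ∑ i, (R i : ℝ) * z i := by
    rw [Finset.mul_sum, ← Finset.sum_add_distrib]
    apply Finset.sum_le_sum
    intro i _
    have := mul_le_mul_of_nonneg_left (hyR i) (hz0 i)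
    ring_nf
    nlinarith [hz0 i, hy0 i]
  linarith
end

section
/- Let F and C be finite sets, r : C → ℤ, R : F → ℤ with R_i ≥ 1. Let x̂ : F × C → ℝ be nonnegative with x̂_{ij} ≤ R_i for all i, j and Σ_{i∈F} x̂_{ij} = r_j for all j, and let α : C → ℝ and αˡ : F × C → ℝ be arbitrary reals. Define π_{ij} = x̂_{ij}(α_j − αˡ_{ij})/R_i if x̂_{ij} = R_i and π_{ij} = 0 if x̂_{ij} < R_i, and z_i = Σ_{j∈C} π_{ij}. Then Σ_{j∈C} r_j α_j − Σ_{i∈F} R_i z_i = Σ_{(i,j): x̂_{ij} < R_i} x̂_{ij} α_j + Σ_{(i,j): x̂_{ij} = R_i} x̂_{ij} αˡ_{ij}. -/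
/-- The algebraic identity at the heart of Lemma 8 of the paper: with
`π_{ij} = x̂_{ij}(α_j − αˡ_{ij})/R_i` when `x̂_{ij} = R_i` and `π_{ij} = 0` otherwise,
and `z_i = ∑_j π_{ij}`, the dual objective `∑_j r_j α_j − ∑_i R_i z_i` decomposes as
`∑_{(i,j) : x̂_{ij} < R_i} x̂_{ij} α_j + ∑_{(i,j) : x̂_{ij} = R_i} x̂_{ij} αˡ_{ij}`. -/
theorem stmt11 {F C : Type*} [Fintype F] [Fintype C]
    (r : C → ℤ) (R : F → ℤ) (hR : ∀ i, 1 ≤ R i)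
    (xhat : F → C → ℝ)
    (hx0 : ∀ i j, 0 ≤ xhat i j)
    (hxR : ∀ i j, xhat i j ≤ (R i : ℝ))
    (hsum : ∀ j, ∑ i, xhat i j = (r j : ℝ))
    (α : C → ℝ) (αl : F → C → ℝ)
    (π : F → C → ℝ)
    (hπ : ∀ i j, π i j =
      if xhat i j = (R i : ℝ) then xhat i j * (α j - αl i j) / (R i : ℝ) else 0)
    (z : F → ℝ) (hz : ∀ i, z i = ∑ j, π i j) :
    ∑ j, (r j : ℝ) * α j - ∑ i, (R i : ℝ) * z i
      = (∑ i, ∑ j, if xhat i j < (R i : ℝ) then xhat i j * α j else 0)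
        + ∑ i, ∑ j, if xhat i j = (R i : ℝ) then xhat i j * αl i j else 0 := by
  have h1 : ∑ j, (r j : ℝ) * α j = ∑ i, ∑ j, xhat i j * α j := by
    rw [Finset.sum_comm]
    refine Finset.sum_congr rfl fun j _ => ?_
    rw [← Finset.sum_mul, hsum]
  rw [h1, ← Finset.sum_sub_distrib, ← Finset.sum_add_distrib]
  refine Finset.sum_congr rfl fun i _ => ?_
  have hRne : (R i : ℝ) ≠ 0 := by exact_mod_cast (lt_of_lt_of_le Int.zero_lt_one (hR i)).ne'
  rw [hz, Finset.mul_sum, ← Finset.sum_sub_distrib, ← Finset.sum_add_distrib]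
  refine Finset.sum_congr rfl fun j _ => ?_
  rw [hπ]
  rcases lt_or_eq_of_le (hxR i j) with h | h
  · simp [h.ne, h]
  · rw [if_pos h, if_neg (by rw [h]; exact lt_irrefl _), if_pos h]
    field_simp
    ring
end

section
/- Let N ≥ 1 be an integer and k_l a real number with 0 ≤ k_l ≤ N. Let c_min > 0, and let F_l, C_l, A, θ₁, θ₂ be reals with C_l ≥ c_min, θ₂ − θ₁ ≤ c_min/(8N²), and 2F_l + C_l ≤ 2(A − k_l θ₁). Then (2 + 1/N)·F_l + C_l ≤ (2 + 1/N)·(A − k_l θ₂). -/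
/-- The key inequality verified in the proof of Lemma 19 of the paper: inequality (12)
follows from inequality (10), the binary search termination condition
`θ₂ − θ₁ ≤ c_min/(8N²)`, and `C_l ≥ c_min`. -/
theorem stmt14 (N : ℤ) (hN : 1 ≤ N) (kl : ℝ) (hkl0 : 0 ≤ kl) (hklN : kl ≤ (N : ℝ))
    (cmin Fl Cl A θ₁ θ₂ : ℝ) (hcmin : 0 < cmin) (hCl : cmin ≤ Cl)
    (hθ : θ₂ - θ₁ ≤ cmin / (8 * (N : ℝ) ^ 2))
    (h10 : 2 * Fl + Cl ≤ 2 * (A - kl * θ₁)) :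
    (2 + 1 / (N : ℝ)) * Fl + Cl ≤ (2 + 1 / (N : ℝ)) * (A - kl * θ₂) := by
  have hn : (1:ℝ) ≤ (N:ℝ) := by exact_mod_cast hN
  have hn0 : (0:ℝ) < (N:ℝ) := by linarith
  have hθ' : (θ₂ - θ₁) * (8 * (N:ℝ)^2) ≤ cmin := by
    have := (le_div_iff₀ (show (0:ℝ) < 8*(N:ℝ)^2 by positivity)).mp hθ
    linarith
  have h1 : kl * (θ₂ - θ₁) * (8 * (N:ℝ)) ≤ cmin := by
    rcases le_or_gt (θ₂ - θ₁) 0 with h | h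
    · nlinarith
    · nlinarith [mul_le_mul hklN (le_refl (θ₂ - θ₁)) h.le hn0.le]
  have hinv : (N:ℝ) * (1 / (N:ℝ)) = 1 := by field_simp
  have hinvpos : 0 < 1 / (N:ℝ) := by positivity
  have hinvle : 1 / (N:ℝ) ≤ 1 := by
    rw [div_le_one hn0]; linarith
  nlinarith [mul_le_mul_of_nonneg_left h10 (le_of_lt (show (0:ℝ) < 2 + 1/(N:ℝ) by linarith)), mul_le_mul_of_nonneg_left h1 hinvpos.le, mul_pos hn0 hinvpos]
end
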